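/- arXiv:2503.02819 — 3 statements merged into one kernel-verified Lean document; each statement's English description precedes it below -/
import Mathlib

section
/- Annealed reweighting equation (Proposition C.5 / Table 1): Suppose q satisfies the reweighting equation ∂_t q_t(x) = q_t(x) ( h_t(x) - E_{q_t}[h_t] ) on I × ℝ^d, where h : I × ℝ^d → ℝ is smooth and h_t is both q_t-integrable and p_{t,β}-integrable for each t. Then the annealed density p_{t,β}(x) := q_t(x)^β / Z_t(β) satisfies the reweighting equation ∂_t p_{t,β}(x) = p_{t,β}(x) ( β h_t(x) - E_{p_{t,β}}[β h_t] ). -/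
open MeasureTheory
open scoped RealInnerProductSpace

noncomputable section

/-- Spatial divergence of a vector field on `ℝ^d` (trace of the Fréchet derivative). -/
def vecDiv {d : ℕ} (F : EuclideanSpace ℝ (Fin d) → EuclideanSpace ℝ (Fin d))
    (x : EuclideanSpace ℝ (Fin d)) : ℝ :=
  LinearMap.trace ℝ (EuclideanSpace ℝ (Fin d)) (fderiv ℝ F x).toLinearMap

/-- Spatial Laplacian `Δ f = div(∇ f)`. -/
def lapl {d : ℕ} (f : EuclideanSpace ℝ (Fin d) → ℝ) (x : EuclideanSpace ℝ (Fin d)) : ℝ :=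
  vecDiv (fun y => gradient f y) x

/-- `∇ log ρ := ∇ρ / ρ`. -/
def gradLog {d : ℕ} (f : EuclideanSpace ℝ (Fin d) → ℝ) (x : EuclideanSpace ℝ (Fin d)) :
    EuclideanSpace ℝ (Fin d) :=
  (f x)⁻¹ • gradient f x

/-- **Annealed reweighting equation** (Proposition C.5 / Table 1). -/
theorem annealed_reweighting_equation
    {d : ℕ} (hd : 1 ≤ d)
    (I : Set ℝ) (hI : IsOpen I)
    (q : ℝ → EuclideanSpace ℝ (Fin d) → ℝ)
    (h : ℝ → EuclideanSpace ℝ (Fin d) → ℝ)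
    (hh : ContDiff ℝ (⊤ : ℕ∞) (Function.uncurry h))
    (hq : ContDiff ℝ (⊤ : ℕ∞) (Function.uncurry q))
    (hqpos : ∀ t x, 0 < q t x)
    (hqprob : ∀ t ∈ I, ∫ x, q t x = 1)
    (β : ℝ) (hβ : 0 < β)
    (hqβint : ∀ t ∈ I, Integrable fun x => q t x ^ β)
    (Z : ℝ → ℝ) (hZ : ∀ t, Z t = ∫ x, q t x ^ β)
    (hZpos : ∀ t ∈ I, 0 < Z t)
    (hZderiv : ∀ t ∈ I, HasDerivAt Z (∫ x, deriv (fun s => q s x ^ β) t) t)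
    (p : ℝ → EuclideanSpace ℝ (Fin d) → ℝ)
    (hp : ∀ t x, p t x = q t x ^ β / Z t)
    (hhq_int : ∀ t ∈ I, Integrable fun x => h t x * q t x)
    (hhp_int : ∀ t ∈ I, Integrable fun x => h t x * p t x)
    (hrw : ∀ t ∈ I, ∀ x,
      deriv (fun s => q s x) t = q t x * (h t x - ∫ y, h t y * q t y)) :
    ∀ t ∈ I, ∀ x,
      deriv (fun s => p s x) t =
        p t x * (β * h t x - ∫ y, β * h t y * p t y) := by
  intro t ht x0
  set E : ℝ := ∫ y, h t y * q t y with hE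
  set P : ℝ := ∫ y, h t y * p t y with hP
  have hZt := hZpos t ht
  have hZne : Z t ≠ 0 := hZt.ne'
  -- derivative of s ↦ q s x
  have hqderiv : ∀ x, HasDerivAt (fun s => q s x) (q t x * (h t x - E)) t := by
    intro x
    have hdiff : DifferentiableAt ℝ (fun s => q s x) t := by
      have := (hq.differentiable (by simp)).comp
        ((differentiable_id.prodMk (differentiable_const x)) : Differentiable ℝ (fun s : ℝ => (s, x)))
      exact this.differentiableAt
    have := hdiff.hasDerivAt
    rwa [hrw t ht x] at this
  -- derivative of s ↦ q s x ^ β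
  have hqβderiv : ∀ x, HasDerivAt (fun s => q s x ^ β)
      (β * (q t x ^ β * (h t x - E))) t := by
    intro x
    have h1 := (hqderiv x).rpow_const (p := β) (Or.inl (hqpos t x).ne')
    have hq1 : q t x ^ (β - 1) * q t x = q t x ^ β := by
      rw [Real.rpow_sub_one (hqpos t x).ne']
      field_simp
      rw [mul_div_assoc, div_self (hqpos t x).ne', mul_one]
    have key : q t x * (h t x - E) * β * q t x ^ (β - 1)
        = β * (q t x ^ β * (h t x - E)) := by
      linear_combination (β * (h t x - E)) * hq1
    rwa [key] at h1
  -- integrability of h * q^β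
  have hhqβ_int : Integrable (fun y => h t y * q t y ^ β) := by
    have : (fun y => h t y * q t y ^ β) = fun y => Z t * (h t y * p t y) := by
      funext y; rw [hp t y]; field_simp
    rw [this]
    exact (hhp_int t ht).const_mul _
  have hintval : (∫ y, h t y * q t y ^ β) = Z t * P := by
    have : (fun y => h t y * q t y ^ β) = fun y => Z t * (h t y * p t y) := by
      funext y; rw [hp t y]; field_simp
    rw [this, MeasureTheory.integral_const_mul]
  -- value of Z'
  have hZ' : HasDerivAt Z (β * (Z t * P - Z t * E)) t := by
    have h0 := hZderiv t ht
    have heq : (∫ x, deriv (fun s => q s x ^ β) t) = β * (Z t * P - Z t * E) := by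
      have h1 : (fun x => deriv (fun s => q s x ^ β) t)
          = fun x => β * (q t x ^ β * (h t x - E)) := by
        funext x; exact (hqβderiv x).deriv
      rw [h1]
      have h2 : (fun x => β * (q t x ^ β * (h t x - E)))
          = fun x => β * (h t x * q t x ^ β) - (β * E) * q t x ^ β := by
        funext x; ring
      rw [h2, integral_sub (hhqβ_int.const_mul β) ((hqβint t ht).const_mul _),
        MeasureTheory.integral_const_mul, MeasureTheory.integral_const_mul, hintval, ← hZ t]
      ring
    rwa [heq] at h0
  -- derivative of p
  have hpfun : (fun s => p s x0) = fun s => q s x0 ^ β / Z s := by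
    funext s; exact hp s x0
  have hpd : HasDerivAt (fun s => p s x0)
      ((β * (q t x0 ^ β * (h t x0 - E)) * Z t - q t x0 ^ β * (β * (Z t * P - Z t * E))) / Z t ^ 2) t := by
    rw [hpfun]
    exact (hqβderiv x0).div hZ' hZne
  rw [hpd.deriv, hp t x0]
  have hPint : (∫ y, β * h t y * p t y) = β * P := by
    have : (fun y => β * h t y * p t y) = fun y => β * (h t y * p t y) := by
      funext y; ring
    rw [this, MeasureTheory.integral_const_mul]
  rw [hPint]
  field_simp
  ring
end
end

section
/- Time-dependent annealing (Proposition C.6 / Table 1): Let β : I → (0,∞) be continuously differentiable, and suppose that for each fixed β > 0 in the range of β_t the annealed density p_{t,β}(x) := q_t(x)^β / Z_t(β) satisfies the Feynman–Kac PDE ∂_t p_{t,β}(x) = -div( p_{t,β}(x) v_{t,β}(x) ) + (σ_{t,β}²/2) Δ p_{t,β}(x) + p_{t,β}(x)( g_{t,β}(x) - E_{p_{t,β}}[g_{t,β}] ), for smooth drifts v_{t,β}, diffusion coefficients σ_{t,β}, and p_{t,β}-integrable weights g_{t,β}, where (t,β,x) ↦ p_{t,β}(x) is jointly smooth and log q_t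 is p_{t,β_t}-integrable for each t. Then the time-dependently annealed density r_t(x) := p_{t,β_t}(x) satisfies ∂_t r_t(x) = -div( r_t(x) v_{t,β_t}(x) ) + (σ_{t,β_t}²/2) Δ r_t(x) + r_t(x)( ĝ_t(x) - E_{r_t}[ĝ_t] ), where the weight function acquires the additional corrector ĝ_t(x) = g_{t,β_t}(x) + (dβ_t/dt) · log q_t(x). -/
open MeasureTheory
open scoped RealInnerProductSpace

noncomputable section

open Real in
lemma abs_log_le {y c : ℝ} (hy : 0 < y) (hc : 0 < c) :
    |Real.log y| ≤ (y ^ c + y ^ (-c)) / c := by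
  have hpc := Real.rpow_pos_of_pos hy c
  have hnc := Real.rpow_pos_of_pos hy (-c)
  have hA : c * Real.log y ≤ y ^ c + y ^ (-c) := by
    have h := Real.log_le_sub_one_of_pos hpc
    rw [Real.log_rpow hy] at h; nlinarith
  have hB : c * (-Real.log y) ≤ y ^ c + y ^ (-c) := by
    have h := Real.log_le_sub_one_of_pos hnc
    rw [Real.log_rpow hy] at h; nlinarith
  rw [le_div_iff₀ hc]
  rcases abs_cases (Real.log y) with ⟨h, _⟩ | ⟨h, _⟩ <;> rw [h] <;> nlinarith

lemma hasDerivAt_Zint {d : ℕ} (q : EuclideanSpace ℝ (Fin d) → ℝ)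
    (hqc : Continuous q) (hqpos : ∀ x, 0 < q x)
    (hint : ∀ b : ℝ, 0 < b → Integrable fun x => q x ^ b)
    {b0 : ℝ} (hb0 : 0 < b0) :
    HasDerivAt (fun b => ∫ x, q x ^ b) (∫ x, q x ^ b0 * Real.log (q x)) b0 := by
  set ε := b0 / 4 with hε
  have hεpos : 0 < ε := by positivity
  set bound : EuclideanSpace ℝ (Fin d) → ℝ :=
    fun x => (2 / ε) * (q x ^ (3 / 2 * b0) + q x ^ (b0 / 2)) with hbound
  have key := hasDerivAt_integral_of_dominated_loc_of_deriv_le (μ := volume)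
    (F := fun b x => q x ^ b) (F' := fun b x => q x ^ b * Real.log (q x))
    (x₀ := b0) (bound := bound) (Metric.ball_mem_nhds b0 hεpos) ?_ (hint b0 hb0) ?_ ?_ ?_ ?_
  · exact key.2
  · filter_upwards with b
    exact (hqc.rpow_const fun x => Or.inl (hqpos x).ne').aestronglyMeasurable
  · exact ((hqc.rpow_const fun x => Or.inl (hqpos x).ne').mul
      (hqc.log fun x => (hqpos x).ne')).aestronglyMeasurable
  · filter_upwards with x b hb
    have hq1 := hqpos x
    rw [Metric.mem_ball, Real.dist_eq, abs_lt] at hb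
    have h1 : ‖q x ^ b * Real.log (q x)‖ = q x ^ b * |Real.log (q x)| := by
      rw [norm_mul, Real.norm_eq_abs, Real.norm_eq_abs,
        abs_of_pos (Real.rpow_pos_of_pos hq1 b)]
    rw [h1]
    have h2 : q x ^ b * |Real.log (q x)| ≤ q x ^ b * ((q x ^ ε + q x ^ (-ε)) / ε) :=
      mul_le_mul_of_nonneg_left (abs_log_le hq1 hεpos)
        (Real.rpow_pos_of_pos hq1 b).le
    have h3 : q x ^ b * ((q x ^ ε + q x ^ (-ε)) / ε)
        = (q x ^ (b + ε) + q x ^ (b - ε)) / ε := by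
      rw [Real.rpow_add hq1 b ε, show b - ε = b + (-ε) by ring, Real.rpow_add hq1 b (-ε)]
      ring
    rw [h3] at h2
    refine h2.trans ?_
    show _ ≤ 2 / ε * (q x ^ (3 / 2 * b0) + q x ^ (b0 / 2))
    rw [show 2 / ε * (q x ^ (3 / 2 * b0) + q x ^ (b0 / 2))
        = 2 * (q x ^ (3 / 2 * b0) + q x ^ (b0 / 2)) / ε by ring]
    gcongr (?_ / ε)
    rcases le_or_gt 1 (q x) with hq2 | hq2
    · have e1 : q x ^ (b + ε) ≤ q x ^ (3 / 2 * b0) :=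
        Real.rpow_le_rpow_of_exponent_le hq2 (by simp only [hε] at hb ⊢; linarith [hb.2])
      have e2 : q x ^ (b - ε) ≤ q x ^ (3 / 2 * b0) :=
        Real.rpow_le_rpow_of_exponent_le hq2 (by simp only [hε] at hb ⊢; linarith [hb.2])
      have e3 : (0:ℝ) < q x ^ (b0 / 2) := Real.rpow_pos_of_pos hq1 _
      nlinarith
    · have e1 : q x ^ (b + ε) ≤ q x ^ (b0 / 2) :=
        Real.rpow_le_rpow_of_exponent_ge hq1 hq2.le (by simp only [hε] at hb ⊢; linarith [hb.1])
      have e2 : q x ^ (b - ε) ≤ q x ^ (b0 / 2) :=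
        Real.rpow_le_rpow_of_exponent_ge hq1 hq2.le (by simp only [hε] at hb ⊢; linarith [hb.1])
      have e3 : (0:ℝ) < q x ^ (3 / 2 * b0) := Real.rpow_pos_of_pos hq1 _
      nlinarith
  · exact (((hint _ (by positivity)).add (hint _ (by positivity))).const_mul _)
  · filter_upwards with x b _
    exact Real.hasStrictDerivAt_const_rpow (hqpos x) b |>.hasDerivAt

/-- **Time-dependent annealing** (Proposition C.6 / Table 1). -/
theorem time_dependent_annealing
    {d : ℕ} (hd : 1 ≤ d)
    (I : Set ℝ) (hI : IsOpen I)
    (q : ℝ → EuclideanSpace ℝ (Fin d) → ℝ)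
    (hq : ContDiff ℝ (⊤ : ℕ∞) (Function.uncurry q))
    (hqpos : ∀ t x, 0 < q t x)
    (hqprob : ∀ t ∈ I, ∫ x, q t x = 1)
    (Z : ℝ → ℝ → ℝ) (hZ : ∀ t b, Z t b = ∫ x, q t x ^ b)
    (hZint : ∀ t ∈ I, ∀ b : ℝ, 0 < b → Integrable fun x => q t x ^ b)
    (hZpos : ∀ t ∈ I, ∀ b : ℝ, 0 < b → 0 < Z t b)
    (p : ℝ → ℝ → EuclideanSpace ℝ (Fin d) → ℝ)
    (hp : ∀ t b x, p t b x = q t x ^ b / Z t b)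
    (hpsmooth : ContDiff ℝ (⊤ : ℕ∞) (fun z : ℝ × ℝ × EuclideanSpace ℝ (Fin d) => p z.1 z.2.1 z.2.2))
    (βt : ℝ → ℝ) (hβt : ContDiff ℝ 1 βt) (hβtpos : ∀ t ∈ I, 0 < βt t)
    (v : ℝ → ℝ → EuclideanSpace ℝ (Fin d) → EuclideanSpace ℝ (Fin d))
    (hv : ContDiff ℝ (⊤ : ℕ∞) (fun z : ℝ × ℝ × EuclideanSpace ℝ (Fin d) => v z.1 z.2.1 z.2.2))
    (σ : ℝ → ℝ → ℝ) (hσ : Continuous fun z : ℝ × ℝ => σ z.1 z.2)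
    (g : ℝ → ℝ → EuclideanSpace ℝ (Fin d) → ℝ)
    (hgint : ∀ t ∈ I, ∀ b ∈ βt '' I, Integrable fun x => g t b x * p t b x)
    (hlogint : ∀ t ∈ I, Integrable fun x => Real.log (q t x) * p t (βt t) x)
    (hFK : ∀ b ∈ βt '' I, ∀ t ∈ I, ∀ x,
      deriv (fun s => p s b x) t =
        -vecDiv (fun y => p t b y • v t b y) x
          + σ t b ^ 2 / 2 * lapl (p t b) x
          + p t b x * (g t b x - ∫ y, g t b y * p t b y)) :
    ∀ t ∈ I, ∀ x,
      deriv (fun s => p s (βt s) x) t =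
        -vecDiv (fun y => p t (βt t) y • v t (βt t) y) x
          + σ t (βt t) ^ 2 / 2 * lapl (p t (βt t)) x
          + p t (βt t) x *
              ((g t (βt t) x + deriv βt t * Real.log (q t x))
                - ∫ y, (g t (βt t) y + deriv βt t * Real.log (q t y)) * p t (βt t) y) := by
  intro t ht x
  set b0 := βt t with hb0def
  have hb0 : 0 < b0 := hβtpos t ht
  have hZ0 : 0 < Z t b0 := hZpos t ht b0 hb0
  set c := deriv βt t with hcdef
  -- continuity of q t
  have hqtc : Continuous (q t) := by
    have := hq.continuous
    exact this.comp (Continuous.prodMk_right t)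
  -- chain rule
  set P : ℝ × ℝ × EuclideanSpace ℝ (Fin d) → ℝ :=
    fun z => p z.1 z.2.1 z.2.2 with hPdef
  have hPd : Differentiable ℝ P := hpsmooth.differentiable (by simp)
  set L := fderiv ℝ P (t, b0, x) with hLdef
  have hL : HasFDerivAt P L (t, b0, x) := (hPd _).hasFDerivAt
  have h1 : HasDerivAt (fun s => p s b0 x) (L (1, 0, 0)) t :=
    hL.comp_hasDerivAt (l := P) t
      ((hasDerivAt_id t).prodMk ((hasDerivAt_const t b0).prodMk (hasDerivAt_const t x)))
  have h2 : HasDerivAt (fun b => p t b x) (L (0, 1, 0)) b0 :=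
    hL.comp_hasDerivAt (l := P) b0
      ((hasDerivAt_const b0 t).prodMk ((hasDerivAt_id b0).prodMk (hasDerivAt_const b0 x)))
  have hβ' : HasDerivAt βt c t := ((hβt.differentiable one_ne_zero) t).hasDerivAt
  have h3 : HasDerivAt (fun s => p s (βt s) x) (L (1, c, 0)) t :=
    hL.comp_hasDerivAt (l := P) t
      ((hasDerivAt_id t).prodMk (hβ'.prodMk (hasDerivAt_const t x)))
  have hsplit : L (1, c, 0) = L (1, 0, 0) + c * L (0, 1, 0) := by
    have hv' : ((1 : ℝ), c, (0 : EuclideanSpace ℝ (Fin d)))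
        = (1, 0, 0) + c • ((0 : ℝ), (1 : ℝ), (0 : EuclideanSpace ℝ (Fin d))) := by
      simp [Prod.ext_iff]
    rw [hv', map_add, L.map_smul, smul_eq_mul]
  -- derivative in b of p t b x
  set N := q t x ^ b0 with hNdef
  set Z' := ∫ y, q t y ^ b0 * Real.log (q t y) with hZ'def
  have hN : HasDerivAt (fun b => q t x ^ b) (N * Real.log (q t x)) b0 :=
    (Real.hasStrictDerivAt_const_rpow (hqpos t x) b0).hasDerivAt
  have hZd : HasDerivAt (fun b => Z t b) Z' b0 := by
    have heq : (fun b => Z t b) = fun b => ∫ y, q t y ^ b := funext (hZ t)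
    rw [heq]
    exact hasDerivAt_Zint (q t) hqtc (hqpos t) (hZint t ht) hb0
  have hdiv : HasDerivAt (fun b => p t b x)
      ((N * Real.log (q t x) * Z t b0 - N * Z') / Z t b0 ^ 2) b0 := by
    have heq : (fun b => p t b x) = fun b => q t x ^ b / Z t b :=
      funext fun b => hp t b x
    rw [heq]
    exact hN.div hZd hZ0.ne'
  have hLb : L (0, 1, 0) = (N * Real.log (q t x) * Z t b0 - N * Z') / Z t b0 ^ 2 :=
    h2.unique hdiv
  -- Z' = Z * Lint
  set Lint := ∫ y, Real.log (q t y) * p t b0 y with hLintdef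
  have hZL : Z' = Z t b0 * Lint := by
    have : Lint = (∫ y, q t y ^ b0 * Real.log (q t y)) / Z t b0 := by
      rw [hLintdef, ← integral_div]
      congr 1
      funext y
      rw [hp]
      ring
    rw [this, ← hZ'def, mul_div_cancel₀ _ hZ0.ne']
  have hLb2 : L (0, 1, 0) = p t b0 x * (Real.log (q t x) - Lint) := by
    rw [hLb, hZL, hp t b0 x, ← hNdef]
    field_simp
  -- expand RHS integral
  have hb0mem : b0 ∈ βt '' I := ⟨t, ht, rfl⟩
  have hintsplit : (∫ y, (g t b0 y + c * Real.log (q t y)) * p t b0 y)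
      = (∫ y, g t b0 y * p t b0 y) + c * Lint := by
    have heq : (fun y => (g t b0 y + c * Real.log (q t y)) * p t b0 y)
        = fun y => g t b0 y * p t b0 y + c * (Real.log (q t y) * p t b0 y) := by
      funext y; ring
    rw [heq, integral_add (hgint t ht b0 hb0mem) ((hlogint t ht).const_mul c),
      integral_const_mul]
  -- assemble
  rw [h3.deriv, hsplit, hLb2, hintsplit]
  have hFK' := hFK b0 hb0mem t ht x
  rw [h1.deriv] at hFK'
  rw [hFK']
  ring
end
end

section
/- Product of reweighting equations (Proposition C.9 / Table 1): Suppose q¹ and q² satisfy the reweighting equations ∂_t q^i_t(x) = q^i_t(x) ( g^i_t(x) - E_{q^i_t}[g^i_t] ) on I × ℝ^d (i = 1, 2), for smooth functions g¹, g² : I × ℝ^d → ℝ with g^i_t integrable against q^i_t and against p_t for each t. Then the product density p_t(x) := q¹_t(x) q²_t(x) / Z_t satisfies the reweighting equation ∂_t p_t(x) = p_t(x) ( g_t(x) - E_{p_t}[g_t] ), where g_t(x) = g¹_t(x) + g²_t(x). -/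
open MeasureTheory
open scoped RealInnerProductSpace

noncomputable section

/-- **Product of reweighting equations** (Proposition C.9 / Table 1). -/
theorem product_of_reweighting_equations
    {d : ℕ} (hd : 1 ≤ d)
    (I : Set ℝ) (hI : IsOpen I)
    (q1 q2 : ℝ → EuclideanSpace ℝ (Fin d) → ℝ)
    (hq1 : ContDiff ℝ (⊤ : ℕ∞) (Function.uncurry q1))
    (hq2 : ContDiff ℝ (⊤ : ℕ∞) (Function.uncurry q2))
    (hq1pos : ∀ t x, 0 < q1 t x) (hq2pos : ∀ t x, 0 < q2 t x)
    (hq1prob : ∀ t ∈ I, ∫ x, q1 t x = 1)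
    (hq2prob : ∀ t ∈ I, ∫ x, q2 t x = 1)
    (g1 g2 : ℝ → EuclideanSpace ℝ (Fin d) → ℝ)
    (hg1 : ContDiff ℝ (⊤ : ℕ∞) (Function.uncurry g1))
    (hg2 : ContDiff ℝ (⊤ : ℕ∞) (Function.uncurry g2))
    (hprodint : ∀ t ∈ I, Integrable fun x => q1 t x * q2 t x)
    (Z : ℝ → ℝ) (hZ : ∀ t, Z t = ∫ x, q1 t x * q2 t x)
    (hZpos : ∀ t ∈ I, 0 < Z t)
    (hZderiv : ∀ t ∈ I, HasDerivAt Z (∫ x, deriv (fun s => q1 s x * q2 s x) t) t)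
    (p : ℝ → EuclideanSpace ℝ (Fin d) → ℝ)
    (hp : ∀ t x, p t x = q1 t x * q2 t x / Z t)
    (hg1q_int : ∀ t ∈ I, Integrable fun x => g1 t x * q1 t x)
    (hg2q_int : ∀ t ∈ I, Integrable fun x => g2 t x * q2 t x)
    (hg1p_int : ∀ t ∈ I, Integrable fun x => g1 t x * p t x)
    (hg2p_int : ∀ t ∈ I, Integrable fun x => g2 t x * p t x)
    (hrw1 : ∀ t ∈ I, ∀ x,
      deriv (fun s => q1 s x) t = q1 t x * (g1 t x - ∫ y, g1 t y * q1 t y))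
    (hrw2 : ∀ t ∈ I, ∀ x,
      deriv (fun s => q2 s x) t = q2 t x * (g2 t x - ∫ y, g2 t y * q2 t y)) :
    ∀ t ∈ I, ∀ x,
      deriv (fun s => p s x) t =
        p t x * ((g1 t x + g2 t x) - ∫ y, (g1 t y + g2 t y) * p t y) := by
  intro t ht x
  have hZne : Z t ≠ 0 := (hZpos t ht).ne'
  set E1 : ℝ := ∫ y, g1 t y * q1 t y with hE1
  set E2 : ℝ := ∫ y, g2 t y * q2 t y with hE2
  set W : ℝ := ∫ y, (g1 t y + g2 t y) * (q1 t y * q2 t y) with hW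
  -- differentiability in time
  have hq1d : ∀ y, DifferentiableAt ℝ (fun s => q1 s y) t := by
    intro y
    have h1 : DifferentiableAt ℝ (fun s : ℝ => (s, y)) t :=
      differentiableAt_id.prodMk (differentiableAt_const _)
    exact ((hq1.differentiable (by simp)) (t, y)).comp t h1
  have hq2d : ∀ y, DifferentiableAt ℝ (fun s => q2 s y) t := by
    intro y
    have h1 : DifferentiableAt ℝ (fun s : ℝ => (s, y)) t :=
      differentiableAt_id.prodMk (differentiableAt_const _)
    exact ((hq2.differentiable (by simp)) (t, y)).comp t h1
  have h1 : ∀ y, HasDerivAt (fun s => q1 s y) (q1 t y * (g1 t y - E1)) t := by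
    intro y; rw [← hrw1 t ht y]; exact (hq1d y).hasDerivAt
  have h2 : ∀ y, HasDerivAt (fun s => q2 s y) (q2 t y * (g2 t y - E2)) t := by
    intro y; rw [← hrw2 t ht y]; exact (hq2d y).hasDerivAt
  have hab : ∀ y, HasDerivAt (fun s => q1 s y * q2 s y)
      (q1 t y * (g1 t y - E1) * q2 t y + q1 t y * (q2 t y * (g2 t y - E2))) t :=
    fun y => (h1 y).mul (h2 y)
  -- integrability facts
  have hint1 : Integrable fun y => g1 t y * (q1 t y * q2 t y) := by
    have h := (hg1p_int t ht).const_mul (Z t)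
    have heq : (fun y => Z t * (g1 t y * p t y)) = fun y => g1 t y * (q1 t y * q2 t y) := by
      funext y; rw [hp]; field_simp
    rwa [heq] at h
  have hint2 : Integrable fun y => g2 t y * (q1 t y * q2 t y) := by
    have h := (hg2p_int t ht).const_mul (Z t)
    have heq : (fun y => Z t * (g2 t y * p t y)) = fun y => g2 t y * (q1 t y * q2 t y) := by
      funext y; rw [hp]; field_simp
    rwa [heq] at h
  have hW_int : Integrable fun y => (g1 t y + g2 t y) * (q1 t y * q2 t y) := by
    have := hint1.add hint2
    simpa [add_mul, Pi.add_def] using this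
  -- compute Z'
  have hZint : (∫ y, deriv (fun s => q1 s y * q2 s y) t) = W - (E1 + E2) * Z t := by
    have hderiv_eq : (fun y => deriv (fun s => q1 s y * q2 s y) t)
        = fun y => (g1 t y + g2 t y) * (q1 t y * q2 t y) - (E1 + E2) * (q1 t y * q2 t y) := by
      funext y; rw [(hab y).deriv]; ring
    rw [hderiv_eq, integral_sub hW_int ((hprodint t ht).const_mul _), integral_const_mul,
      ← hZ, ← hW]
  have hZd : HasDerivAt Z (W - (E1 + E2) * Z t) t := by
    rw [← hZint]; exact hZderiv t ht
  -- derivative of p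
  have hpfun : (fun s => p s x) = fun s => q1 s x * q2 s x / Z s := funext fun s => hp s x
  have hpd : HasDerivAt (fun s => p s x)
      (((q1 t x * (g1 t x - E1) * q2 t x + q1 t x * (q2 t x * (g2 t x - E2))) * Z t
          - q1 t x * q2 t x * (W - (E1 + E2) * Z t)) / Z t ^ 2) t := by
    rw [hpfun]; exact (hab x).div hZd hZne
  -- expectation under p
  have hEP : (∫ y, (g1 t y + g2 t y) * p t y) = W / Z t := by
    have heq : (fun y => (g1 t y + g2 t y) * p t y)
        = fun y => ((g1 t y + g2 t y) * (q1 t y * q2 t y)) / Z t := by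
      funext y; rw [hp]; ring
    rw [heq, integral_div, ← hW]
  rw [hpd.deriv, hEP, hp]
  field_simp
  ring
end
end
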